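/- arXiv:math/0609788 — 6 statements merged into one kernel-verified Lean document; each statement's English description precedes it below -/
import Mathlib

section
/- For every permutation class Y (containing the permutation 1) and every permutation π, the shortest Y-deflation of π is unique. -/
/-- Pattern involvement: `σ` occurs as a pattern in `π`. -/
def Involves {k n : ℕ} (σ : Equiv.Perm (Fin k)) (π : Equiv.Perm (Fin n)) : Prop :=
  ∃ f : Fin k → Fin n, StrictMono f ∧ ∀ a b : Fin k, σ a < σ b ↔ π (f a) < π (f b)

/-- Finite permutations of arbitrary length. -/
abbrev PermS := Σ n : ℕ, Equiv.Perm (Fin n)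

/-- Pattern involvement on permutations of arbitrary length. -/
def SInvolves (s t : PermS) : Prop := Involves s.2 t.2

/-- A permutation class: a set of permutations closed downwards under involvement. -/
def IsPermClass (X : Set PermS) : Prop :=
  ∀ s t : PermS, SInvolves s t → t ∈ X → s ∈ X

/-- A set of positions is consecutive (order-convex). -/
def Consec {n : ℕ} (s : Finset (Fin n)) : Prop :=
  ∀ ⦃a b c : Fin n⦄, a ∈ s → c ∈ s → a ≤ b → b ≤ c → b ∈ s

/-- An interval (block) of a permutation: consecutive positions with consecutive values. -/
def IsInterval {n : ℕ} (π : Equiv.Perm (Fin n)) (s : Finset (Fin n)) : Prop :=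
  Consec s ∧ Consec (s.image π)

/-- `α` is the pattern of `π` on the set of positions `s`. -/
def IsPatternOf {k n : ℕ} (α : Equiv.Perm (Fin k)) (π : Equiv.Perm (Fin n))
    (s : Finset (Fin n)) : Prop :=
  ∃ f : Fin k → Fin n, StrictMono f ∧ (∀ i, f i ∈ s) ∧ (∀ x ∈ s, ∃ i, f i = x) ∧
    ∀ a b : Fin k, α a < α b ↔ π (f a) < π (f b)

/-- `π` is the inflation of `σ` with the given (nonempty, interval) blocks. -/
def IsInflation {n m : ℕ} (π : Equiv.Perm (Fin n)) (σ : Equiv.Perm (Fin m))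
    (blocks : Fin m → Finset (Fin n)) : Prop :=
  (∀ i, (blocks i).Nonempty) ∧
  (∀ i, IsInterval π (blocks i)) ∧
  (∀ x : Fin n, ∃! i, x ∈ blocks i) ∧
  (∀ i j : Fin m, i < j → ∀ x ∈ blocks i, ∀ y ∈ blocks j, x < y) ∧
  (∀ i j : Fin m, i ≠ j → ∀ x ∈ blocks i, ∀ y ∈ blocks j, (σ i < σ j ↔ π x < π y))

/-- `π'` is a `Y`-deflation of `π`: `π = π'[α₁,…,α_k]` with all `αᵢ ∈ Y`. -/
def IsYDeflation (Y : Set PermS) {m n : ℕ} (π' : Equiv.Perm (Fin m))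
    (π : Equiv.Perm (Fin n)) : Prop :=
  ∃ blocks : Fin m → Finset (Fin n), IsInflation π π' blocks ∧
    ∀ i, ∃ (k : ℕ) (α : Equiv.Perm (Fin k)), (⟨k, α⟩ : PermS) ∈ Y ∧ IsPatternOf α π (blocks i)

/-- Membership in the wreath product `X ≀ Y`. -/
def InWreath (X Y : Set PermS) {n : ℕ} (π : Equiv.Perm (Fin n)) : Prop :=
  ∃ (m : ℕ) (σ : Equiv.Perm (Fin m)), (⟨m, σ⟩ : PermS) ∈ X ∧ IsYDeflation Y σ π

/-- The wreath product `X ≀ Y` as a set of permutations. -/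
def WreathSet (X Y : Set PermS) : Set PermS := {s : PermS | InWreath X Y s.2}

/-- The class of permutations avoiding every pattern in `B`. -/
def Av (B : Set PermS) : Set PermS := {s : PermS | ∀ b ∈ B, ¬ SInvolves b s}

/-- The basis of a class: minimal permutations not in it. -/
def PermBasis (C : Set PermS) : Set PermS :=
  {s : PermS | s ∉ C ∧ ∀ t : PermS, SInvolves t s → t ≠ s → t ∈ C}

/-- A permutation is simple if its only intervals are trivial. -/
def IsSimple {n : ℕ} (π : Equiv.Perm (Fin n)) : Prop :=
  ∀ s : Finset (Fin n), IsInterval π s → s.card ≤ 1 ∨ s = Finset.univ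

/-- Sum decomposable: a proper nonempty initial block with the smallest values. -/
def SumDecomposable {n : ℕ} (π : Equiv.Perm (Fin n)) : Prop :=
  ∃ s : Finset (Fin n), s.Nonempty ∧ s ≠ Finset.univ ∧
    ∀ x ∈ s, ∀ y : Fin n, y ∉ s → x < y ∧ π x < π y

/-- Skew decomposable: a proper nonempty initial block with the largest values. -/
def SkewDecomposable {n : ℕ} (π : Equiv.Perm (Fin n)) : Prop :=
  ∃ s : Finset (Fin n), s.Nonempty ∧ s ≠ Finset.univ ∧
    ∀ x ∈ s, ∀ y : Fin n, y ∉ s → x < y ∧ π y < π x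

/-!
Suppose `B` and `E` are the block families of two shortest `Y`-deflations and `B i`, `E i` are
disjoint, say `B i` lies left of `E i`. Take the first index `r` at which the block `E r` starts
to the right of the block `B r`, and splice `E 0, …, E (r-1)` with the blocks of `B` from the first
point of `E r` on. The block of `B` that gets cut is still an interval, because its removed part
lies inside `E (r-1)`; every new block is contained in an old one, so it is still a `Y`-block, and
the spliced family is shorter. Hence corresponding blocks of two shortest deflations meet, and the
skeletons, read off from points of these blocks, coincide.
-/

open Finset

section Permutations

variable {n k : ℕ}

lemma exists_perm_lt_iff_of_injective (v : Fin k → Fin n) (hv : Function.Injective v) :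
    ∃ σ : Equiv.Perm (Fin k), ∀ a b, σ a < σ b ↔ v a < v b := by
  have hsorted : StrictMono (v ∘ Tuple.sort v) :=
    (Tuple.monotone_sort v).strictMono_of_injective (hv.comp (Tuple.sort v).injective)
  refine ⟨(Tuple.sort v)⁻¹, fun a b => ?_⟩
  simpa using (hsorted.lt_iff_lt (a := (Tuple.sort v)⁻¹ a) (b := (Tuple.sort v)⁻¹ b)).symm

lemma perm_eq_of_lt_iff_lt {σ τ : Equiv.Perm (Fin k)} (h : ∀ a b, σ a < σ b ↔ τ a < τ b) :
    σ = τ := by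
  have hmono : StrictMono (σ ∘ τ.symm) := fun a b hab => (h _ _).2 (by simpa using hab)
  exact Equiv.ext fun x => by simpa using congrFun hmono.eq_id (τ x)

end Permutations

section Intervals

variable {n : ℕ} {π : Equiv.Perm (Fin n)} {s t : Finset (Fin n)}

lemma consec_singleton (a : Fin n) : Consec {a} := by
  intro x b c hx hc hxb hbc
  rw [mem_singleton] at *
  subst hx hc
  exact le_antisymm hbc hxb

lemma Consec.sdiff (hs : Consec s) (ht : Consec t) (hts : ¬ t ⊆ s) : Consec (s \ t) := by
  obtain ⟨w, hwt, hws⟩ := not_subset.1 hts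
  intro a b c ha hc hab hbc
  rw [mem_sdiff] at *
  refine ⟨hs ha.1 hc.1 hab hbc, fun hb => ?_⟩
  rcases le_or_gt w a with hwa | haw
  · exact ha.2 (ht hwt hb hwa hab)
  rcases le_or_gt c w with hcw | hwc
  · exact hc.2 (ht hb hwt hbc hcw)
  · exact hws (hs ha.1 hc.1 haw.le hwc.le)

lemma Consec.lt_or_gt_of_disjoint (hs : Consec s) (ht : Consec t) (hst : Disjoint s t)
    (hsn : s.Nonempty) (htn : t.Nonempty) :
    (∀ x ∈ s, ∀ y ∈ t, x < y) ∨ (∀ x ∈ s, ∀ y ∈ t, y < x) := by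
  obtain ⟨a, ha⟩ := hsn
  obtain ⟨b, hb⟩ := htn
  have hne : ∀ x ∈ s, ∀ y ∈ t, x ≠ y := fun x hx y hy hxy =>
    disjoint_left.1 hst hx (hxy ▸ hy)
  rcases (hne a ha b hb).lt_or_gt with hab | hba
  · refine .inl fun x hx y hy => (hne x hx y hy).lt_of_le (not_lt.1 fun hyx => ?_)
    rcases le_or_gt a y with hay | hya
    · exact hne y (hs ha hx hay hyx.le) y hy rfl
    · exact hne a ha a (ht hy hb hya.le hab.le) rfl
  · refine .inr fun x hx y hy => (hne x hx y hy).symm.lt_of_le (not_lt.1 fun hxy => ?_)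
    rcases le_or_gt b x with hbx | hxb
    · exact hne x hx x (ht hb hy hbx hxy.le) rfl
    · exact hne b (hs hx ha hxb.le hba.le) b hb rfl

lemma IsInterval.sdiff (hs : IsInterval π s) (ht : IsInterval π t) (hts : ¬ t ⊆ s) :
    IsInterval π (s \ t) := by
  refine ⟨hs.1.sdiff ht.1 hts, ?_⟩
  rw [image_sdiff _ _ π.injective]
  exact hs.2.sdiff ht.2 fun h => hts ((image_subset_image_iff π.injective).1 h)

end Intervals

section Patterns

variable {n : ℕ} {π : Equiv.Perm (Fin n)} {s t : Finset (Fin n)}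

lemma exists_isPatternOf (π : Equiv.Perm (Fin n)) (s : Finset (Fin n)) :
    ∃ (k : ℕ) (α : Equiv.Perm (Fin k)), IsPatternOf α π s := by
  set e := s.orderIsoOfFin rfl
  have he : StrictMono (fun i => (e i : Fin n)) := fun a b hab => e.strictMono hab
  obtain ⟨α, hα⟩ := exists_perm_lt_iff_of_injective (fun i => π (e i))
    (π.injective.comp he.injective)
  exact ⟨_, α, fun i => e i, he, fun i => (e i).2, fun x hx => ⟨e.symm ⟨x, hx⟩, by simp⟩, hα⟩

lemma IsPatternOf.involves_of_subset {k l : ℕ} {α : Equiv.Perm (Fin k)}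
    {β : Equiv.Perm (Fin l)} (hα : IsPatternOf α π s) (hβ : IsPatternOf β π t) (hst : s ⊆ t) :
    Involves α β := by
  obtain ⟨f, hf, hfs, -, hαf⟩ := hα
  obtain ⟨g, hg, -, hgt, hβg⟩ := hβ
  choose h hgh using fun i => hgt (f i) (hst (hfs i))
  refine ⟨h, fun a b hab => hg.lt_iff_lt.1 ?_, fun a b => ?_⟩
  · rw [hgh, hgh]
    exact hf hab
  · rw [hαf, hβg, hgh, hgh]

def IsYBlock (Y : Set PermS) (π : Equiv.Perm (Fin n)) (s : Finset (Fin n)) : Prop :=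
  ∃ (k : ℕ) (α : Equiv.Perm (Fin k)), (⟨k, α⟩ : PermS) ∈ Y ∧ IsPatternOf α π s

lemma IsYBlock.mono {Y : Set PermS} (hY : IsPermClass Y) (hs : IsYBlock Y π s) (hts : t ⊆ s) :
    IsYBlock Y π t := by
  obtain ⟨k, β, hβY, hβ⟩ := hs
  obtain ⟨l, α, hα⟩ := exists_isPatternOf π t
  exact ⟨l, α, hY ⟨l, α⟩ ⟨k, β⟩ (hα.involves_of_subset hβ hts) hβY, hα⟩

end Patterns

structure IsIntervalPartition {n m : ℕ} (π : Equiv.Perm (Fin n))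
    (blocks : Fin m → Finset (Fin n)) : Prop where
  nonempty : ∀ i, (blocks i).Nonempty
  isInterval : ∀ i, IsInterval π (blocks i)
  exists_mem : ∀ x, ∃ i, x ∈ blocks i
  lt_of_lt : ∀ i j, i < j → ∀ x ∈ blocks i, ∀ y ∈ blocks j, x < y

lemma IsInflation.isIntervalPartition {n m : ℕ} {π : Equiv.Perm (Fin n)}
    {σ : Equiv.Perm (Fin m)} {blocks : Fin m → Finset (Fin n)} (h : IsInflation π σ blocks) :
    IsIntervalPartition π blocks :=
  ⟨h.1, h.2.1, fun x => (h.2.2.1 x).exists, h.2.2.2.1⟩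

namespace IsIntervalPartition

variable {n m : ℕ} {π : Equiv.Perm (Fin n)} {B : Fin m → Finset (Fin n)} {i j r : Fin m}
  {x y x₀ : Fin n}

lemma eq_of_mem (hB : IsIntervalPartition π B) (hi : x ∈ B i) (hj : x ∈ B j) : i = j := by
  by_contra hne
  rcases lt_or_gt_of_ne hne with h | h
  · exact lt_irrefl x (hB.lt_of_lt _ _ h x hi x hj)
  · exact lt_irrefl x (hB.lt_of_lt _ _ h x hj x hi)

noncomputable def index (hB : IsIntervalPartition π B) (x : Fin n) : Fin m :=
  (hB.exists_mem x).choose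

lemma mem_index (hB : IsIntervalPartition π B) (x : Fin n) : x ∈ B (hB.index x) :=
  (hB.exists_mem x).choose_spec

lemma index_eq (hB : IsIntervalPartition π B) (hx : x ∈ B i) : hB.index x = i :=
  hB.eq_of_mem (hB.mem_index x) hx

lemma lt_of_index_lt (hB : IsIntervalPartition π B) (h : hB.index x < hB.index y) : x < y :=
  hB.lt_of_lt _ _ h x (hB.mem_index x) y (hB.mem_index y)

lemma index_mono (hB : IsIntervalPartition π B) : Monotone hB.index := fun _ _ hxy =>
  not_lt.1 fun h => (hB.lt_of_index_lt h).not_ge hxy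

lemma lt_iff_lt_of_ne (hB : IsIntervalPartition π B) (hij : i ≠ j) {x' y' : Fin n}
    (hx : x ∈ B i) (hx' : x' ∈ B i) (hy : y ∈ B j) (hy' : y' ∈ B j) : π x < π y ↔ π x' < π y' := by
  have hdisj : Disjoint ((B i).image π) ((B j).image π) :=
    disjoint_image π.injective |>.2 <| disjoint_left.2 fun z hzi hzj => hij (hB.eq_of_mem hzi hzj)
  rcases (hB.isInterval i).2.lt_or_gt_of_disjoint (hB.isInterval j).2 hdisj
    ((hB.nonempty i).image π) ((hB.nonempty j).image π) with h | h
  · exact iff_of_true (h _ (mem_image_of_mem π hx) _ (mem_image_of_mem π hy))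
      (h _ (mem_image_of_mem π hx') _ (mem_image_of_mem π hy'))
  · exact iff_of_false (h _ (mem_image_of_mem π hx) _ (mem_image_of_mem π hy)).not_gt
      (h _ (mem_image_of_mem π hx') _ (mem_image_of_mem π hy')).not_gt

lemma index_lt_of_lt_min (hB : IsIntervalPartition π B) (hx₀ : x₀ ∈ B r)
    (hx₀_le : ∀ y ∈ B r, x₀ ≤ y) (hx : x < x₀) : hB.index x < r := by
  refine not_le.1 fun hrx => hx.not_ge ?_
  rcases hrx.lt_or_eq with hrx | hrx
  · exact (hB.lt_of_lt _ _ hrx _ hx₀ _ (hB.mem_index x)).le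
  · exact hx₀_le x (hrx ▸ hB.mem_index x)

lemma exists_isInflation (hB : IsIntervalPartition π B) :
    ∃ σ : Equiv.Perm (Fin m), IsInflation π σ B := by
  choose rep hrep using hB.nonempty
  obtain ⟨σ, hσ⟩ := exists_perm_lt_iff_of_injective (π ∘ rep) fun i j h =>
    hB.eq_of_mem (hrep i) (π.injective h ▸ hrep j)
  refine ⟨σ, hB.nonempty, hB.isInterval,
    fun x => ⟨hB.index x, hB.mem_index x, fun i hi => hB.eq_of_mem hi (hB.mem_index x)⟩,
    hB.lt_of_lt, fun i j hij _ hx _ hy => ?_⟩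
  rw [hσ]
  exact hB.lt_iff_lt_of_ne hij (hrep i) hx (hrep j) hy

end IsIntervalPartition

lemma IsInflation.skeleton_eq {n m : ℕ} {π : Equiv.Perm (Fin n)} {σ τ : Equiv.Perm (Fin m)}
    {B E : Fin m → Finset (Fin n)} (hσ : IsInflation π σ B) (hτ : IsInflation π τ E)
    (h : ∀ i, ¬ Disjoint (B i) (E i)) : σ = τ := by
  choose x hxB hxE using fun i => not_disjoint_iff.1 (h i)
  refine perm_eq_of_lt_iff_lt fun a b => ?_
  rcases eq_or_ne a b with rfl | hab
  · simp
  · rw [hσ.2.2.2.2 a b hab _ (hxB a) _ (hxB b), hτ.2.2.2.2 a b hab _ (hxE a) _ (hxE b)]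

section Splice

variable {n mE mB : ℕ} {π : Equiv.Perm (Fin n)} {E : Fin mE → Finset (Fin n)}
  {B : Fin mB → Finset (Fin n)} {r : Fin mE} {j : Fin mB} {x₀ : Fin n}

def splice (E : Fin mE → Finset (Fin n)) (B : Fin mB → Finset (Fin n)) (r : Fin mE)
    (j : Fin mB) (x₀ : Fin n) : Fin (r + (mB - j)) → Finset (Fin n) :=
  Fin.append (fun k : Fin r => E (Fin.castLE r.isLt.le k))
    (fun k : Fin (mB - j) => (B ⟨j + k, by omega⟩).filter (x₀ ≤ ·))

@[simp]
lemma splice_castAdd (k : Fin r) :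
    splice E B r j x₀ (Fin.castAdd _ k) = E (Fin.castLE r.isLt.le k) :=
  Fin.append_left _ _ k

@[simp]
lemma splice_natAdd (k : Fin (mB - j)) :
    splice E B r j x₀ (Fin.natAdd _ k) = (B ⟨j + k, by omega⟩).filter (x₀ ≤ ·) :=
  Fin.append_right _ _ k

lemma splice_natAdd_of_pos (hB : IsIntervalPartition π B) (hx₀B : x₀ ∈ B j)
    (k : Fin (mB - j)) (hk : 0 < (k : ℕ)) :
    splice E B r j x₀ (Fin.natAdd _ k) = B ⟨j + k, by omega⟩ := by
  rw [splice_natAdd]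
  exact filter_true_of_mem fun y hy =>
    (hB.lt_of_lt j _ (Fin.lt_def.2 (by simp; omega)) x₀ hx₀B y hy).le

lemma splice_natAdd_of_eq_zero (k : Fin (mB - j)) (hk : (k : ℕ) = 0) :
    splice E B r j x₀ (Fin.natAdd _ k) = (B j).filter (x₀ ≤ ·) := by
  simp [hk]

lemma exists_mem_splice (hE : IsIntervalPartition π E) (hB : IsIntervalPartition π B)
    (hx₀E : x₀ ∈ E r) (hx₀_le : ∀ y ∈ E r, x₀ ≤ y) (hx₀B : x₀ ∈ B j) (x : Fin n) :
    ∃ i, x ∈ splice E B r j x₀ i := by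
  rcases lt_or_ge x x₀ with hx | hx
  · refine ⟨Fin.castAdd _ ⟨hE.index x, hE.index_lt_of_lt_min hx₀E hx₀_le hx⟩, ?_⟩
    rw [splice_castAdd]
    exact hE.mem_index x
  · have hj : j ≤ hB.index x := hB.index_eq hx₀B ▸ hB.index_mono hx
    refine ⟨Fin.natAdd _ ⟨hB.index x - j, by omega⟩, ?_⟩
    rw [splice_natAdd]
    refine mem_filter.2 ⟨?_, hx⟩
    convert hB.mem_index x using 2
    ext
    dsimp only
    omega

lemma lt_of_lt_splice (hE : IsIntervalPartition π E) (hB : IsIntervalPartition π B)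
    (hx₀E : x₀ ∈ E r) {i i' : Fin (r + (mB - j))} (hii' : i < i') :
    ∀ x ∈ splice E B r j x₀ i, ∀ y ∈ splice E B r j x₀ i', x < y := by
  induction i using Fin.addCases with
  | left k =>
    induction i' using Fin.addCases with
    | left k' =>
      rw [splice_castAdd, splice_castAdd]
      exact hE.lt_of_lt _ _ (Fin.lt_def.2 (Fin.lt_def.1 hii'))
    | right k' =>
      rw [splice_castAdd, splice_natAdd]
      exact fun x hx y hy =>
        (hE.lt_of_lt _ r (Fin.lt_def.2 k.isLt) x hx x₀ hx₀E).trans_le (mem_filter.1 hy).2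
  | right k =>
    induction i' using Fin.addCases with
    | left k' =>
      have := Fin.lt_def.1 hii'
      simp at this
      omega
    | right k' =>
      rw [splice_natAdd, splice_natAdd]
      intro x hx y hy
      exact hB.lt_of_lt _ _ (Fin.lt_def.2 (by simpa using Fin.lt_def.1 hii')) x
        (mem_filter.1 hx).1 y (mem_filter.1 hy).1

lemma IsIntervalPartition.splice (hE : IsIntervalPartition π E) (hB : IsIntervalPartition π B)
    (hx₀E : x₀ ∈ E r) (hx₀_le : ∀ y ∈ E r, x₀ ≤ y) (hx₀B : x₀ ∈ B j)
    (hcut : IsInterval π ((B j).filter (x₀ ≤ ·))) :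
    IsIntervalPartition π (splice E B r j x₀) := by
  refine ⟨fun i => ?_, fun i => ?_, exists_mem_splice hE hB hx₀E hx₀_le hx₀B,
    fun _ _ => lt_of_lt_splice hE hB hx₀E⟩
  · induction i using Fin.addCases with
    | left k => simpa using hE.nonempty _
    | right k =>
      rcases (k : ℕ).eq_zero_or_pos with hk | hk
      · rw [splice_natAdd_of_eq_zero k hk]
        exact ⟨x₀, mem_filter.2 ⟨hx₀B, le_rfl⟩⟩
      · rw [splice_natAdd_of_pos hB hx₀B k hk]
        exact hB.nonempty _
  · induction i using Fin.addCases with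
    | left k => simpa using hE.isInterval _
    | right k =>
      rcases (k : ℕ).eq_zero_or_pos with hk | hk
      · rw [splice_natAdd_of_eq_zero k hk]
        exact hcut
      · rw [splice_natAdd_of_pos hB hx₀B k hk]
        exact hB.isInterval _

lemma isYBlock_splice {Y : Set PermS} (hY : IsPermClass Y) (hEY : ∀ i, IsYBlock Y π (E i))
    (hBY : ∀ i, IsYBlock Y π (B i)) (k : Fin (r + (mB - j))) :
    IsYBlock Y π (splice E B r j x₀ k) := by
  induction k using Fin.addCases with
  | left k => simpa using hEY _
  | right k =>
    rw [splice_natAdd]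
    exact (hBY _).mono hY (filter_subset _ _)

end Splice

/-- The part of `B j` cut off below `x₀` lies inside the block `E r'` preceding `E r`; since
`E r'` sticks out of `B j`, removing it from `B j` leaves an interval. -/
lemma isInterval_filter_le {n m : ℕ} {π : Equiv.Perm (Fin n)} {B E : Fin m → Finset (Fin n)}
    (hB : IsIntervalPartition π B) (hE : IsIntervalPartition π E) {r r' j : Fin m}
    (hr' : (r' : ℕ) + 1 = r) {x₀ y' : Fin n} (hx₀E : x₀ ∈ E r) (hx₀_le : ∀ y ∈ E r, x₀ ≤ y)
    (hy'E : y' ∈ E r') (hy'B : ∀ b ∈ B j, y' < b) :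
    IsInterval π ((B j).filter (x₀ ≤ ·)) := by
  have hr'r : r' < r := Fin.lt_def.2 (by omega)
  have hsub : ∀ y ∈ B j, y < x₀ → y ∈ E r' := by
    intro y hyB hy
    have hlt := Fin.lt_def.1 (hE.index_lt_of_lt_min hx₀E hx₀_le hy)
    have hge : r' ≤ hE.index y := not_lt.1 fun h =>
      lt_asymm (hE.lt_of_lt _ _ h y (hE.mem_index y) _ hy'E) (hy'B y hyB)
    have : hE.index y = r' := Fin.ext (by have := Fin.le_def.1 hge; omega)
    exact this ▸ hE.mem_index y
  have hcut : (B j).filter (x₀ ≤ ·) = B j \ E r' := by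
    ext y
    simp only [mem_filter, mem_sdiff]
    refine and_congr_right fun hyB =>
      ⟨fun hy hyE => ?_, fun hyE => not_lt.1 fun hy => hyE (hsub y hyB hy)⟩
    exact hy.not_gt (hE.lt_of_lt r' r hr'r y hyE x₀ hx₀E)
  have hnsub : ¬ E r' ⊆ B j := fun h => lt_irrefl _ (hy'B y' (h hy'E))
  rw [hcut]
  exact (hB.isInterval j).sdiff (hE.isInterval r') hnsub

lemma exists_shorter_of_forall_lt {n m : ℕ} {π : Equiv.Perm (Fin n)} {Y : Set PermS}
    {B E : Fin m → Finset (Fin n)} (hY : IsPermClass Y) (hB : IsIntervalPartition π B)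
    (hBY : ∀ i, IsYBlock Y π (B i)) (hE : IsIntervalPartition π E)
    (hEY : ∀ i, IsYBlock Y π (E i)) (i : Fin m) (hi : ∀ x ∈ B i, ∀ y ∈ E i, x < y) :
    ∃ (m' : ℕ) (blocks : Fin m' → Finset (Fin n)), m' < m ∧ IsIntervalPartition π blocks ∧
      ∀ k, IsYBlock Y π (blocks k) := by
  set first : Fin m → Fin n := fun k => (E k).min' (hE.nonempty k)
  have first_mem : ∀ k, first k ∈ E k := fun k => min'_mem _ _
  have first_le : ∀ k, ∀ y ∈ E k, first k ≤ y := fun k y hy => min'_le _ _ hy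
  have hi_first : i < hB.index (first i) := by
    obtain ⟨b, hb⟩ := hB.nonempty i
    refine lt_of_le_of_ne ?_ fun h => ?_
    · exact (hB.index_eq hb).ge.trans (hB.index_mono (hi b hb _ (first_mem i)).le)
    · have := hB.mem_index (first i)
      rw [← h] at this
      exact lt_irrefl _ (hi _ this _ (first_mem i))
  -- `r` is the first index at which `E` has overtaken `B`.
  obtain ⟨r, hr, hr_min⟩ :=
    WellFounded.has_min wellFounded_lt {k | k < hB.index (first k)} ⟨i, hi_first⟩
  set x₀ := first r
  obtain ⟨j, hx₀j⟩ : ∃ j, hB.index x₀ = j := ⟨_, rfl⟩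
  replace hr : r < j := by
    rw [← hx₀j]
    exact hr
  have hx₀B : x₀ ∈ B j := hx₀j ▸ hB.mem_index x₀
  have hr0 : (r : ℕ) ≠ 0 := fun h0 => by
    obtain ⟨b, hb⟩ := hB.nonempty r
    have hbx : b < x₀ := hB.lt_of_lt _ _ hr b hb x₀ hx₀B
    have := Fin.lt_def.1 (hE.index_lt_of_lt_min (first_mem r) (first_le r) hbx)
    omega
  set r' : Fin m := ⟨r - 1, by omega⟩
  have hr' : (r' : ℕ) + 1 = r := by simp [r']; omega
  have hleft : ∀ b ∈ B j, first r' < b := by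
    have : hB.index (first r') ≤ r' := not_lt.1 fun h => hr_min r' h (Fin.lt_def.2 (by omega))
    exact fun b hb => hB.lt_of_index_lt <| hB.index_eq hb ▸
      this.trans_lt ((Fin.lt_def.2 (by omega)).trans hr)
  have hlen : (r : ℕ) + (m - j) < m := by
    have := Fin.lt_def.1 hr
    omega
  exact ⟨_, splice E B r j x₀, hlen, hE.splice hB (first_mem r) (first_le r) hx₀B
    (isInterval_filter_le hB hE hr' (first_mem r) (first_le r) (first_mem r') hleft),
    isYBlock_splice hY hEY hBY⟩

section Deflations

variable {n m : ℕ} {π : Equiv.Perm (Fin n)} {Y : Set PermS}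

lemma isYDeflation_self (h1 : (⟨1, 1⟩ : PermS) ∈ Y) (π : Equiv.Perm (Fin n)) :
    IsYDeflation Y π π := by
  refine ⟨fun i => {i}, ⟨fun i => singleton_nonempty i,
    fun i => ⟨consec_singleton i, by simpa using consec_singleton (π i)⟩,
    fun x => ⟨x, mem_singleton_self x, fun i hi => (mem_singleton.1 hi).symm⟩, ?_, ?_⟩,
    fun i => ⟨1, 1, h1, fun _ => i, Subsingleton.strictMono _, fun _ => mem_singleton_self i,
      fun x hx => ⟨0, (mem_singleton.1 hx).symm⟩, fun a b => by simp [Subsingleton.elim a b]⟩⟩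
  · intro i j hij x hx y hy
    rw [mem_singleton] at hx hy
    exact hx ▸ hy ▸ hij
  · intro i j _ x hx y hy
    rw [mem_singleton] at hx hy
    rw [hx, hy]

lemma IsYDeflation.eq_of_forall_le (hY : IsPermClass Y) {σ τ : Equiv.Perm (Fin m)}
    (hσ : IsYDeflation Y σ π) (hτ : IsYDeflation Y τ π)
    (hmin : ∀ q : PermS, IsYDeflation Y q.2 π → m ≤ q.1) : σ = τ := by
  obtain ⟨B, hBσ, hBY⟩ := hσ
  obtain ⟨E, hEτ, hEY⟩ := hτ
  have hB := hBσ.isIntervalPartition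
  have hE := hEτ.isIntervalPartition
  have hshort : ∀ (m' : ℕ) (blocks : Fin m' → Finset (Fin n)), m' < m →
      IsIntervalPartition π blocks → ¬ ∀ k, IsYBlock Y π (blocks k) := fun m' blocks hm' hP hPY =>
    have ⟨ρ, hρ⟩ := hP.exists_isInflation
    hm'.not_ge (hmin ⟨m', ρ⟩ ⟨blocks, hρ, hPY⟩)
  refine hBσ.skeleton_eq hEτ fun i hdisj => ?_
  rcases (hB.isInterval i).1.lt_or_gt_of_disjoint (hE.isInterval i).1 hdisj (hB.nonempty i)
    (hE.nonempty i) with h | h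
  · obtain ⟨m', blocks, hm', hP, hPY⟩ := exists_shorter_of_forall_lt hY hB hBY hE hEY i h
    exact hshort m' blocks hm' hP hPY
  · obtain ⟨m', blocks, hm', hP, hPY⟩ := exists_shorter_of_forall_lt hY hE hEY hB hBY i
      fun x hx y hy => h y hy x hx
    exact hshort m' blocks hm' hP hPY

end Deflations

/-- for every permutation class `Y` containing the permutation `1`
and every permutation `π`, the shortest `Y`-deflation of `π` exists and is unique. -/
theorem shortest_deflation_unique (Y : Set PermS) (hY : IsPermClass Y)
    (h1 : (⟨1, 1⟩ : PermS) ∈ Y) {n : ℕ} (π : Equiv.Perm (Fin n)) :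
    ∃! p : PermS, IsYDeflation Y p.2 π ∧
      ∀ q : PermS, IsYDeflation Y q.2 π → p.1 ≤ q.1 := by
  classical
  have hex : ∃ m, ∃ σ : Equiv.Perm (Fin m), IsYDeflation Y σ π := ⟨n, π, isYDeflation_self h1 π⟩
  obtain ⟨σ, hσ⟩ := Nat.find_spec hex
  have hmin : ∀ q : PermS, IsYDeflation Y q.2 π → Nat.find hex ≤ q.1 :=
    fun q hq => Nat.find_min' hex ⟨q.2, hq⟩
  refine ⟨⟨_, σ⟩, ⟨hσ, hmin⟩, ?_⟩
  rintro ⟨m, τ⟩ ⟨hτ, hτ_min⟩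
  obtain rfl : m = Nat.find hex := le_antisymm (hτ_min ⟨_, σ⟩ hσ) (hmin _ hτ)
  exact congrArg _ (IsYDeflation.eq_of_forall_le hY hτ hσ hτ_min)
end

section
/- If π is a permutation with π ∉ Y for a permutation class Y containing 1, and σ is the skeleton of π (the unique simple permutation such that π is an inflation of σ), then σ is involved in the Y-profile π^Y. -/
/-!
Every block of a `Y`-deflation of `π ∉ Y` is a proper interval of `π`. If the skeleton `σ` has
length at least 3, a proper interval `S` of `π` lies inside one block of the skeleton: the
skeleton blocks that `S` meets form an interval of `σ`; were it all of `σ`, the block of a point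
outside `S` would be extreme in position and in value, and deleting it would leave an interval
of `σ` of length `m - 1 ≥ 2`. So representatives of the skeleton blocks lie in distinct profile
blocks, and these profile blocks carry a copy of `σ` inside `π^Y`. A skeleton of length 2 needs
only two points in distinct profile blocks, and shorter skeletons are trivially involved.
-/

open Finset Function

lemma consec_univ_erase {n : ℕ} {p : Fin n} (hp : (∀ a, p ≤ a) ∨ ∀ a, a ≤ p) :
    Consec (univ.erase p) := by
  intro a b c ha hc hab hbc
  refine mem_erase.mpr ⟨?_, mem_univ b⟩
  rintro rfl
  rcases hp with hp | hp
  · exact (mem_erase.mp ha).1 (le_antisymm hab (hp a))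
  · exact (mem_erase.mp hc).1 (le_antisymm (hp c) hbc)

lemma injective_of_fin_two {α : Type*} {f : Fin 2 → α} (h : f 0 ≠ f 1) : Injective f := by
  intro i j
  fin_cases i <;> fin_cases j <;> simp_all [eq_comm]

lemma IsPatternOf.involves_of_univ {k n : ℕ} {α : Equiv.Perm (Fin k)} {π : Equiv.Perm (Fin n)}
    (h : IsPatternOf α π univ) : Involves π α := by
  obtain ⟨f, hmono, -, hsurj, hval⟩ := h
  let e := Equiv.ofBijective f ⟨hmono.injective, fun x => hsurj x (mem_univ x)⟩
  have hfe : ∀ x, f (e.symm x) = x := e.apply_symm_apply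
  refine ⟨e.symm, fun a b hab => ?_, fun a b => ?_⟩
  · rwa [← hmono.lt_iff_lt, hfe, hfe]
  · rw [hval, hfe, hfe]

lemma IsPermClass.mem_of_isPatternOf_univ {Y : Set PermS} (hY : IsPermClass Y) {k n : ℕ}
    {α : Equiv.Perm (Fin k)} {π : Equiv.Perm (Fin n)} (hα : (⟨k, α⟩ : PermS) ∈ Y)
    (h : IsPatternOf α π univ) : (⟨n, π⟩ : PermS) ∈ Y :=
  hY ⟨n, π⟩ ⟨k, α⟩ h.involves_of_univ hα

namespace IsInflation

variable {n m : ℕ} {π : Equiv.Perm (Fin n)} {σ : Equiv.Perm (Fin m)}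
  {B : Fin m → Finset (Fin n)} {S : Finset (Fin n)}

noncomputable def blockOf (h : IsInflation π σ B) (x : Fin n) : Fin m :=
  (h.2.2.1 x).exists.choose

lemma nonempty (h : IsInflation π σ B) (i : Fin m) : (B i).Nonempty := h.1 i

lemma isInterval (h : IsInflation π σ B) (i : Fin m) : IsInterval π (B i) := h.2.1 i

lemma mem_blockOf (h : IsInflation π σ B) (x : Fin n) : x ∈ B (h.blockOf x) :=
  (h.2.2.1 x).exists.choose_spec

lemma blockOf_eq (h : IsInflation π σ B) {x : Fin n} {i : Fin m} (hx : x ∈ B i) :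
    h.blockOf x = i :=
  (h.2.2.1 x).unique (h.mem_blockOf x) hx

lemma lt_of_mem_of_mem (h : IsInflation π σ B) {i j : Fin m} (hij : i < j) {x y : Fin n}
    (hx : x ∈ B i) (hy : y ∈ B j) : x < y :=
  h.2.2.2.1 i j hij x hx y hy

lemma lt_iff_lt (h : IsInflation π σ B) {i j : Fin m} (hij : i ≠ j) {x y : Fin n}
    (hx : x ∈ B i) (hy : y ∈ B j) : σ i < σ j ↔ π x < π y :=
  h.2.2.2.2 i j hij x hx y hy

lemma blockOf_lt_of_lt (h : IsInflation π σ B) {x y : Fin n} (hxy : x < y)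
    (hne : h.blockOf x ≠ h.blockOf y) : h.blockOf x < h.blockOf y :=
  hne.lt_or_gt.resolve_right fun hlt =>
    (h.lt_of_mem_of_mem hlt (h.mem_blockOf y) (h.mem_blockOf x)).not_gt hxy

lemma exists_mem_of_mem_image_blockOf (h : IsInflation π σ B) {l : Fin m}
    (hl : l ∈ S.image h.blockOf) : ∃ z ∈ S, z ∈ B l := by
  obtain ⟨z, hzS, rfl⟩ := mem_image.mp hl
  exact ⟨z, hzS, h.mem_blockOf z⟩

lemma mem_of_lt_of_lt (h : IsInflation π σ B) (hS : Consec S) {a b c : Fin m} {x y z : Fin n}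
    (hx : x ∈ B a) (hy : y ∈ B b) (hz : z ∈ B c) (hxS : x ∈ S) (hzS : z ∈ S) (hab : a < b)
    (hbc : b < c) : y ∈ S :=
  hS hxS hzS (h.lt_of_mem_of_mem hab hx hy).le (h.lt_of_mem_of_mem hbc hy hz).le

lemma mem_of_apply_lt_of_lt (h : IsInflation π σ B) (hS : IsInterval π S) {a b c : Fin m}
    {x y z : Fin n} (hx : x ∈ B a) (hy : y ∈ B b) (hz : z ∈ B c) (hxS : x ∈ S) (hzS : z ∈ S)
    (hab : σ a < σ b) (hbc : σ b < σ c) : y ∈ S := by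
  have hxy := (h.lt_iff_lt (ne_of_apply_ne σ hab.ne) hx hy).mp hab
  have hyz := (h.lt_iff_lt (ne_of_apply_ne σ hbc.ne) hy hz).mp hbc
  obtain ⟨y', hy'S, hy'⟩ :=
    mem_image.mp (hS.2 (mem_image_of_mem π hxS) (mem_image_of_mem π hzS) hxy.le hyz.le)
  exact π.injective hy' ▸ hy'S

lemma isInterval_image_blockOf (h : IsInflation π σ B)
    (hS : IsInterval π S) : IsInterval σ (S.image h.blockOf) := by
  have hmeet := fun l (hl : l ∈ S.image h.blockOf) => h.exists_mem_of_mem_image_blockOf hl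
  constructor
  · intro a b c ha hc hab hbc
    obtain rfl | hab := hab.eq_or_lt
    · exact ha
    obtain rfl | hbc := hbc.eq_or_lt
    · exact hc
    obtain ⟨x, hxS, hx⟩ := hmeet a ha
    obtain ⟨z, hzS, hz⟩ := hmeet c hc
    obtain ⟨y, hy⟩ := h.nonempty b
    rw [← h.blockOf_eq hy]
    exact mem_image_of_mem _ (h.mem_of_lt_of_lt hS.1 hx hy hz hxS hzS hab hbc)
  · intro u v w hu hw huv hvw
    obtain ⟨a, ha, rfl⟩ := mem_image.mp hu
    obtain ⟨c, hc, rfl⟩ := mem_image.mp hw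
    obtain rfl | huv := huv.eq_or_lt
    · exact hu
    obtain rfl | hvw := hvw.eq_or_lt
    · exact hw
    obtain ⟨x, hxS, hx⟩ := hmeet a ha
    obtain ⟨z, hzS, hz⟩ := hmeet c hc
    obtain ⟨y, hy⟩ := h.nonempty (σ.symm v)
    rw [← σ.apply_symm_apply v] at huv hvw ⊢
    rw [← h.blockOf_eq hy]
    exact mem_image_of_mem _ <| mem_image_of_mem _ <|
      h.mem_of_apply_lt_of_lt hS hx hy hz hxS hzS huv hvw

/-- The block of the missed point `w` is extreme both in position and in value. -/
lemma isInterval_univ_erase_blockOf (h : IsInflation π σ B)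
    (hS : IsInterval π S) (hall : S.image h.blockOf = univ) {w : Fin n} (hwS : w ∉ S) :
    IsInterval σ (univ.erase (h.blockOf w)) := by
  have hmeet := fun l => h.exists_mem_of_mem_image_blockOf (hall ▸ mem_univ l)
  have hw := h.mem_blockOf w
  refine ⟨consec_univ_erase ?_, ?_⟩
  · by_contra! ⟨⟨a, hap⟩, ⟨c, hpc⟩⟩
    obtain ⟨x, hxS, hx⟩ := hmeet a
    obtain ⟨z, hzS, hz⟩ := hmeet c
    exact hwS (h.mem_of_lt_of_lt hS.1 hx hw hz hxS hzS hap hpc)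
  · rw [image_erase σ.injective, image_univ_equiv]
    refine consec_univ_erase ?_
    by_contra! ⟨⟨a, hap⟩, ⟨c, hpc⟩⟩
    obtain ⟨x, hxS, hx⟩ := hmeet (σ.symm a)
    obtain ⟨z, hzS, hz⟩ := hmeet (σ.symm c)
    rw [← σ.apply_symm_apply a] at hap
    rw [← σ.apply_symm_apply c] at hpc
    exact hwS (h.mem_of_apply_lt_of_lt hS hx hw hz hxS hzS hap hpc)

lemma blockOf_eq_of_mem_interval (h : IsInflation π σ B) (hσ : IsSimple σ) (hm : 3 ≤ m)
    (hS : IsInterval π S) (hSne : S ≠ univ) {x y : Fin n} (hx : x ∈ S)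
    (hy : y ∈ S) : h.blockOf x = h.blockOf y := by
  by_contra hxy
  have hall : S.image h.blockOf = univ := by
    refine (hσ _ (h.isInterval_image_blockOf hS)).resolve_left fun hcard => hxy ?_
    exact card_le_one.mp hcard _ (mem_image_of_mem _ hx) _ (mem_image_of_mem _ hy)
  obtain ⟨w, hwS⟩ : ∃ w, w ∉ S := by
    by_contra! hS
    exact hSne (eq_univ_iff_forall.mpr hS)
  rcases hσ _ (h.isInterval_univ_erase_blockOf hS hall hwS) with hcard | huniv
  · rw [card_erase_of_mem (mem_univ _), card_univ, Fintype.card_fin] at hcard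
    omega
  · exact (mem_erase.mp (huniv ▸ mem_univ (h.blockOf w))).1 rfl

lemma involves_of_injective {k : ℕ} {τ : Equiv.Perm (Fin k)} {C : Fin k → Finset (Fin n)}
    (hB : IsInflation π σ B) (hC : IsInflation π τ C) {rep : Fin m → Fin n}
    (hrep : ∀ i, rep i ∈ B i) (hinj : Injective (hC.blockOf ∘ rep)) : Involves σ τ := by
  refine ⟨hC.blockOf ∘ rep, fun i j hij => ?_, fun i j => ?_⟩
  · exact hC.blockOf_lt_of_lt (hB.lt_of_mem_of_mem hij (hrep i) (hrep j)) (hinj.ne hij.ne)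
  · obtain rfl | hij := eq_or_ne i j
    · simp
    · rw [hB.lt_iff_lt hij (hrep i) (hrep j),
        hC.lt_iff_lt (hinj.ne hij) (hC.mem_blockOf _) (hC.mem_blockOf _)]

lemma exists_injective_of_two {k : ℕ} {σ : Equiv.Perm (Fin 2)} {B : Fin 2 → Finset (Fin n)}
    {τ : Equiv.Perm (Fin k)} {C : Fin k → Finset (Fin n)} (hB : IsInflation π σ B)
    (hC : IsInflation π τ C) (hCne : ∀ j, C j ≠ univ) :
    ∃ rep : Fin 2 → Fin n, (∀ i, rep i ∈ B i) ∧ Injective (hC.blockOf ∘ rep) := by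
  obtain ⟨z₀, hz₀⟩ := hB.nonempty 0
  obtain ⟨z₁, hz₁⟩ := hB.nonempty 1
  by_cases hz : hC.blockOf z₀ = hC.blockOf z₁
  · obtain ⟨w, hw⟩ : ∃ w, w ∉ C (hC.blockOf z₀) := by
      by_contra! hC'
      exact hCne _ (eq_univ_iff_forall.mpr hC')
    have hwz : hC.blockOf w ≠ hC.blockOf z₀ := fun h => hw (h ▸ hC.mem_blockOf w)
    obtain h0 | h1 : hB.blockOf w = 0 ∨ hB.blockOf w = 1 := by omega
    · have hw₀ : w ∈ B 0 := h0 ▸ hB.mem_blockOf w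
      refine ⟨![w, z₁], Fin.forall_fin_two.mpr ⟨hw₀, hz₁⟩, ?_⟩
      exact injective_of_fin_two (by simpa [← hz] using hwz)
    · have hw₁ : w ∈ B 1 := h1 ▸ hB.mem_blockOf w
      refine ⟨![z₀, w], Fin.forall_fin_two.mpr ⟨hz₀, hw₁⟩, ?_⟩
      exact injective_of_fin_two (by simpa using hwz.symm)
  · refine ⟨![z₀, z₁], Fin.forall_fin_two.mpr ⟨hz₀, hz₁⟩, ?_⟩
    exact injective_of_fin_two (by simpa using hz)

lemma exists_injective_of_isSimple {k : ℕ} {τ : Equiv.Perm (Fin k)} {C : Fin k → Finset (Fin n)}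
    (hB : IsInflation π σ B) (hσ : IsSimple σ) (hm : 3 ≤ m) (hC : IsInflation π τ C)
    (hCne : ∀ j, C j ≠ univ) :
    ∃ rep : Fin m → Fin n, (∀ i, rep i ∈ B i) ∧ Injective (hC.blockOf ∘ rep) := by
  choose rep hrep using hB.nonempty
  refine ⟨rep, hrep, fun i j (hij : hC.blockOf (rep i) = hC.blockOf (rep j)) => ?_⟩
  have hj : rep j ∈ C (hC.blockOf (rep i)) := hij ▸ hC.mem_blockOf (rep j)
  rw [← hB.blockOf_eq (hrep i), ← hB.blockOf_eq (hrep j)]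
  exact hB.blockOf_eq_of_mem_interval hσ hm (hC.isInterval _) (hCne _) (hC.mem_blockOf _) hj

end IsInflation

theorem skeleton_involved_in_profile_general (Y : Set PermS) (hY : IsPermClass Y)
    {n m k : ℕ} (π : Equiv.Perm (Fin n))
    (hπ : (⟨n, π⟩ : PermS) ∉ Y) (σ : Equiv.Perm (Fin m)) (hσ : IsSimple σ)
    (hskel : ∃ blocks : Fin m → Finset (Fin n), IsInflation π σ blocks)
    (πY : Equiv.Perm (Fin k)) (hdef : IsYDeflation Y πY π) :
    Involves σ πY := by
  obtain ⟨B, hB⟩ := hskel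
  obtain ⟨C, hC, hCY⟩ := hdef
  have hCne : ∀ j, C j ≠ univ := fun j hj => by
    obtain ⟨_, α, hα, hpat⟩ := hCY j
    exact hπ (hY.mem_of_isPatternOf_univ hα (hj ▸ hpat))
  obtain ⟨rep, hrep, hinj⟩ :
      ∃ rep : Fin m → Fin n, (∀ i, rep i ∈ B i) ∧ Injective (hC.blockOf ∘ rep) := by
    rcases (show m ≤ 1 ∨ m = 2 ∨ 3 ≤ m by omega) with hm | rfl | hm
    · have : Subsingleton (Fin m) := Fin.subsingleton_iff_le_one.mpr hm
      choose rep hrep using hB.nonempty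
      exact ⟨rep, hrep, injective_of_subsingleton _⟩
    · exact hB.exists_injective_of_two hC hCne
    · exact hB.exists_injective_of_isSimple hσ hm hC hCne
  exact hB.involves_of_injective hC hrep hinj

/-- if `π ∉ Y` and `σ` is the skeleton of `π` (a simple permutation
of which `π` is an inflation), then `σ` is involved in the `Y`-profile `π^Y`. -/
theorem skeleton_involved_in_profile (Y : Set PermS) (hY : IsPermClass Y)
    (h1 : (⟨1, 1⟩ : PermS) ∈ Y) {n m k : ℕ} (π : Equiv.Perm (Fin n))
    (hπ : (⟨n, π⟩ : PermS) ∉ Y) (σ : Equiv.Perm (Fin m)) (hσ : IsSimple σ)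
    (hskel : ∃ blocks : Fin m → Finset (Fin n), IsInflation π σ blocks)
    (πY : Equiv.Perm (Fin k)) (hdef : IsYDeflation Y πY π)
    (hmin : ∀ q : PermS, IsYDeflation Y q.2 π → k ≤ q.1) :
    Involves σ πY :=
  skeleton_involved_in_profile_general Y hY π hπ σ hσ hskel πY hdef
end

section
/- Let π be a permutation, i ≠ j positions of π, and let k, ℓ be distinct positions belonging to the minimal block mb(π; i, j). Then mb(π; k, ℓ) ⊆ mb(π; i, j). Moreover, if k ≤ i < j ≤ ℓ, then mb(π; k, ℓ) = mb(π; i, j). -/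
/-- The minimal block of `π` on positions `i, j`. -/
def IsMinBlock {n : ℕ} (π : Equiv.Perm (Fin n)) (i j : Fin n) (s : Finset (Fin n)) : Prop :=
  IsInterval π s ∧ i ∈ s ∧ j ∈ s ∧
    ∀ t : Finset (Fin n), IsInterval π t → i ∈ t → j ∈ t → s ⊆ t

namespace IsMinBlock

variable {n : ℕ} {π : Equiv.Perm (Fin n)} {i j : Fin n} {s : Finset (Fin n)}

theorem subset (hs : IsMinBlock π i j s) {t : Finset (Fin n)} (ht : IsInterval π t)
    (hi : i ∈ t) (hj : j ∈ t) : s ⊆ t :=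
  hs.2.2.2 t ht hi hj

theorem mem_of_le_of_le (hs : IsMinBlock π i j s) {x : Fin n} (hix : i ≤ x) (hxj : x ≤ j) :
    x ∈ s :=
  hs.1.1 hs.2.1 hs.2.2.1 hix hxj

theorem eq_of_mem {k l : Fin n} {t : Finset (Fin n)} (hs : IsMinBlock π i j s)
    (ht : IsMinBlock π k l t) (hit : i ∈ t) (hjt : j ∈ t) (hks : k ∈ s) (hls : l ∈ s) :
    s = t :=
  (hs.subset ht.1 hit hjt).antisymm (ht.subset hs.1 hks hls)

end IsMinBlock

theorem minBlock_mono_general {n : ℕ} (π : Equiv.Perm (Fin n)) (i j k l : Fin n)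
    (s t : Finset (Fin n))
    (hs : IsMinBlock π i j s) (ht : IsMinBlock π k l t)
    (hks : k ∈ s) (hls : l ∈ s) :
    t ⊆ s ∧ (k ≤ i → i < j → j ≤ l → t = s) := by
  refine ⟨ht.subset hs.1 hks hls, fun hki hij hjl => ?_⟩
  have hit : i ∈ t := ht.mem_of_le_of_le hki (hij.le.trans hjl)
  have hjt : j ∈ t := ht.mem_of_le_of_le (hki.trans hij.le) hjl
  exact ht.eq_of_mem hs hks hls hit hjt

/-- if `k, ℓ` are distinct positions inside `mb(π; i, j)`, then
`mb(π; k, ℓ) ⊆ mb(π; i, j)`; moreover if `k ≤ i < j ≤ ℓ` then they are equal. -/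
theorem minBlock_mono {n : ℕ} (π : Equiv.Perm (Fin n)) (i j k l : Fin n)
    (hij : i ≠ j) (hkl : k ≠ l) (s t : Finset (Fin n))
    (hs : IsMinBlock π i j s) (ht : IsMinBlock π k l t)
    (hks : k ∈ s) (hls : l ∈ s) :
    t ⊆ s ∧ (k ≤ i → i < j → j ≤ l → t = s) :=
  minBlock_mono_general π i j k l s t hs ht hks hls
end

section
/- For each k ≥ 3, the permutation β_k = 2,5,1,3,7,4, 9,6,11,8,...,2k+3,2k, 2k+5,2k+4,2k+2 (of length 2k+5) contains exactly one occurrence of the pattern 321, namely the subsequence 2k+5, 2k+4, 2k+2. -/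
/-- The value of the antichain element `β_k` at (0-indexed) position `j` (0-indexed values). -/
def betaVal (k j : ℕ) : ℕ :=
  if j = 0 then 1 else if j = 1 then 4 else if j = 2 then 0 else if j = 3 then 2
  else if j = 4 then 6 else if j = 5 then 3
  else if j = 2*k+2 then 2*k+4 else if j = 2*k+3 then 2*k+3 else if j = 2*k+4 then 2*k+1
  else if j % 2 = 0 then j + 2 else j - 2

/-- `π` is the permutation `β_k = 2,5,1,3,7,4,9,6,11,8,…,2k+3,2k,2k+5,2k+4,2k+2`. -/
def IsBeta (k : ℕ) (π : Equiv.Perm (Fin (2*k+5))) : Prop :=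
  ∀ j : Fin (2*k+5), (π j : ℕ) = betaVal k (j : ℕ)

lemma betaVal_le_add_two {k j : ℕ} (hj : j ≠ 1) : betaVal k j ≤ j + 2 := by
  unfold betaVal
  split_ifs <;> omega

lemma le_betaVal_add_two {k j : ℕ} (hj : j ≠ 2*k+4) : j ≤ betaVal k j + 2 := by
  unfold betaVal
  split_ifs <;> omega

lemma betaVal_le_add_three (k j : ℕ) : betaVal k j ≤ j + 3 := by
  unfold betaVal
  split_ifs <;> omega

lemma le_betaVal_add_three (k j : ℕ) : j ≤ betaVal k j + 3 := by
  unfold betaVal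
  split_ifs <;> omega

lemma eq_zero_or_eq_three_or_eq_of_betaVal_near {k j : ℕ} (hlo : j ≤ betaVal k j + 1)
    (hhi : betaVal k j ≤ j + 1) : j = 0 ∨ j = 3 ∨ j = 2*k+3 := by
  revert hlo hhi
  unfold betaVal
  split_ifs <;> omega

lemma betaVal_one {k : ℕ} : betaVal k 1 = 4 := rfl

lemma betaVal_three {k : ℕ} : betaVal k 3 = 2 := rfl

lemma betaVal_two_mul_add_two {k : ℕ} (hk : 2 ≤ k) : betaVal k (2*k+2) = 2*k+4 := by
  rw [betaVal, if_neg (by omega), if_neg (by omega), if_neg (by omega), if_neg (by omega),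
    if_neg (by omega), if_neg (by omega), if_pos rfl]

lemma betaVal_two_mul_add_three {k : ℕ} (hk : 2 ≤ k) : betaVal k (2*k+3) = 2*k+3 := by
  rw [betaVal, if_neg (by omega), if_neg (by omega), if_neg (by omega), if_neg (by omega),
    if_neg (by omega), if_neg (by omega), if_neg (by omega), if_pos rfl]

lemma betaVal_two_mul_add_four {k : ℕ} (hk : 1 ≤ k) : betaVal k (2*k+4) = 2*k+1 := by
  rw [betaVal, if_neg (by omega), if_neg (by omega), if_neg (by omega), if_neg (by omega),
    if_neg (by omega), if_neg (by omega), if_neg (by omega), if_neg (by omega), if_pos rfl]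

theorem betaVal_321_iff {k p q r : ℕ} (hk : 2 ≤ k) (hpq : p < q) (hqr : q < r)
    (hr : r < 2*k+5) :
    betaVal k r < betaVal k q ∧ betaVal k q < betaVal k p ↔
      p = 2*k+2 ∧ q = 2*k+3 ∧ r = 2*k+4 := by
  constructor
  · rintro ⟨hrq, hqp⟩
    have hq : q = 0 ∨ q = 3 ∨ q = 2*k+3 :=
      eq_zero_or_eq_three_or_eq_of_betaVal_near
        (by have := le_betaVal_add_three k r; omega)
        (by have := betaVal_le_add_three k p; omega)
    rcases hq with rfl | rfl | rfl
    · omega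
    · rw [betaVal_three] at hrq
      by_cases hr4 : r = 2*k+4
      · rw [hr4, betaVal_two_mul_add_four (by omega)] at hrq
        omega
      · have := le_betaVal_add_two hr4
        omega
    · rw [betaVal_two_mul_add_three hk] at hqp
      have hp1 : p ≠ 1 := by
        rintro rfl
        rw [betaVal_one] at hqp
        omega
      have := betaVal_le_add_two (k := k) hp1
      omega
  · rintro ⟨rfl, rfl, rfl⟩
    rw [betaVal_two_mul_add_two hk, betaVal_two_mul_add_three hk,
      betaVal_two_mul_add_four (by omega)]
    omega

/-- for `k ≥ 3`, the permutation `β_k` contains exactly one occurrence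
of the pattern `321`, namely the subsequence `2k+5, 2k+4, 2k+2` (at the last three
positions). -/
theorem beta_unique_321 (k : ℕ) (hk : 3 ≤ k) (π : Equiv.Perm (Fin (2*k+5)))
    (hπ : IsBeta k π) :
    (∀ p q r : Fin (2*k+5), p < q → q < r → π q < π p → π r < π q →
      (p : ℕ) = 2*k+2 ∧ (q : ℕ) = 2*k+3 ∧ (r : ℕ) = 2*k+4) ∧
    (∃ p q r : Fin (2*k+5), (p : ℕ) = 2*k+2 ∧ (q : ℕ) = 2*k+3 ∧ (r : ℕ) = 2*k+4 ∧
      p < q ∧ q < r ∧ π q < π p ∧ π r < π q) := by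
  simp only [Fin.lt_def, hπ _]
  refine ⟨fun p q r hpq hqr hqp hrq => ?_, ⟨2*k+2, by omega⟩, ⟨2*k+3, by omega⟩,
    ⟨2*k+4, by omega⟩, rfl, rfl, rfl, Nat.lt_succ_self _, Nat.lt_succ_self _, ?_⟩
  · exact (betaVal_321_iff (by omega) hpq hqr r.isLt).mp ⟨hrq, hqp⟩
  · exact ((betaVal_321_iff (by omega) (by omega) (by omega) (by omega)).mpr ⟨rfl, rfl, rfl⟩).symm
end

section
/- The set {β_k : k ≥ 3}, where β_k = 2,5,1,3,7,4, 9,6,11,8,...,2k+3,2k, 2k+5,2k+4,2k+2, is an infinite antichain in the pattern involvement order: for all k ≠ l, β_k is not involved in β_l. -/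
private lemma bv_spec (k j : ℕ) (hk : 3 ≤ k) (hj : j < 2*k+5) :
    (j = 0 ∧ betaVal k j = 1) ∨ (j = 1 ∧ betaVal k j = 4) ∨ (j = 2 ∧ betaVal k j = 0) ∨
    (j = 3 ∧ betaVal k j = 2) ∨ (j = 4 ∧ betaVal k j = 6) ∨ (j = 5 ∧ betaVal k j = 3) ∨
    (j = 2*k+2 ∧ betaVal k j = 2*k+4) ∨ (j = 2*k+3 ∧ betaVal k j = 2*k+3) ∨
    (j = 2*k+4 ∧ betaVal k j = 2*k+1) ∨
    (6 ≤ j ∧ j ≤ 2*k+1 ∧ j % 2 = 0 ∧ betaVal k j = j + 2) ∨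
    (6 ≤ j ∧ j ≤ 2*k+1 ∧ j % 2 = 1 ∧ betaVal k j = j - 2) := by
  by_cases h0 : j = 0
  · exact Or.inl ⟨h0, by subst h0; rfl⟩
  by_cases h1 : j = 1
  · exact Or.inr <| Or.inl ⟨h1, by subst h1; rfl⟩
  by_cases h2 : j = 2
  · exact Or.inr <| Or.inr <| Or.inl ⟨h2, by subst h2; rfl⟩
  by_cases h3 : j = 3
  · exact Or.inr <| Or.inr <| Or.inr <| Or.inl ⟨h3, by subst h3; rfl⟩
  by_cases h4 : j = 4
  · exact Or.inr <| Or.inr <| Or.inr <| Or.inr <| Or.inl ⟨h4, by subst h4; rfl⟩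
  by_cases h5 : j = 5
  · exact Or.inr <| Or.inr <| Or.inr <| Or.inr <| Or.inr <| Or.inl ⟨h5, by subst h5; rfl⟩
  by_cases hA : j = 2*k+2
  · refine Or.inr <| Or.inr <| Or.inr <| Or.inr <| Or.inr <| Or.inr <| Or.inl ⟨hA, ?_⟩
    unfold betaVal
    rw [if_neg h0, if_neg h1, if_neg h2, if_neg h3, if_neg h4, if_neg h5, if_pos hA]
  by_cases hB : j = 2*k+3
  · refine Or.inr <| Or.inr <| Or.inr <| Or.inr <| Or.inr <| Or.inr <| Or.inr <| Or.inl ⟨hB, ?_⟩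
    unfold betaVal
    rw [if_neg h0, if_neg h1, if_neg h2, if_neg h3, if_neg h4, if_neg h5, if_neg hA, if_pos hB]
  by_cases hC : j = 2*k+4
  · refine Or.inr <| Or.inr <| Or.inr <| Or.inr <| Or.inr <| Or.inr <| Or.inr <| Or.inr <|
      Or.inl ⟨hC, ?_⟩
    unfold betaVal
    rw [if_neg h0, if_neg h1, if_neg h2, if_neg h3, if_neg h4, if_neg h5, if_neg hA, if_neg hB,
      if_pos hC]
  by_cases hp : j % 2 = 0
  · refine Or.inr <| Or.inr <| Or.inr <| Or.inr <| Or.inr <| Or.inr <| Or.inr <| Or.inr <|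
      Or.inr <| Or.inl ⟨by omega, by omega, hp, ?_⟩
    unfold betaVal
    rw [if_neg h0, if_neg h1, if_neg h2, if_neg h3, if_neg h4, if_neg h5, if_neg hA, if_neg hB,
      if_neg hC, if_pos hp]
  · refine Or.inr <| Or.inr <| Or.inr <| Or.inr <| Or.inr <| Or.inr <| Or.inr <| Or.inr <|
      Or.inr <| Or.inr ⟨by omega, by omega, by omega, ?_⟩
    unfold betaVal
    rw [if_neg h0, if_neg h1, if_neg h2, if_neg h3, if_neg h4, if_neg h5, if_neg hA, if_neg hB,
      if_neg hC, if_neg hp]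

private lemma bv_mid (l m : ℕ) (hl : 3 ≤ l) (h2 : 2 ≤ m) (hm : m ≤ l) :
    betaVal l (2*m) = 2*m+2 ∧ betaVal l (2*m+1) = 2*m-1 := by
  have s1 := bv_spec l (2*m) hl (by omega)
  have s2 := bv_spec l (2*m+1) hl (by omega)
  omega

private lemma bv_tail (l : ℕ) (hl : 3 ≤ l) :
    betaVal l (2*l+2) = 2*l+4 ∧ betaVal l (2*l+3) = 2*l+3 ∧ betaVal l (2*l+4) = 2*l+1 := by
  have s1 := bv_spec l (2*l+2) hl (by omega)
  have s2 := bv_spec l (2*l+3) hl (by omega)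
  have s3 := bv_spec l (2*l+4) hl (by omega)
  omega

private lemma bv_inj (l p q : ℕ) (hl : 3 ≤ l) (hp : p < 2*l+5) (hq : q < 2*l+5)
    (h : betaVal l p = betaVal l q) : p = q := by
  have s1 := bv_spec l p hl hp
  have s2 := bv_spec l q hl hq
  omega

set_option maxHeartbeats 4000000 in
private lemma bv_inv (l a b : ℕ) (hl : 3 ≤ l) (hab : a < b) (hb : b < 2*l+5)
    (hv : betaVal l b < betaVal l a) :
    (b = 2 ∧ a ≤ 1) ∨ (b = 3 ∧ a = 1) ∨ (b = 5 ∧ (a = 1 ∨ a = 4)) ∨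
    (b % 2 = 1 ∧ 7 ≤ b ∧ b ≤ 2*l+1 ∧ (a = b - 3 ∨ a = b - 1)) ∨
    (b = 2*l+3 ∧ a = 2*l+2) ∨ (b = 2*l+4 ∧ (a = 2*l ∨ a = 2*l+2 ∨ a = 2*l+3)) := by
  have s1 := bv_spec l a hl (by omega)
  have s2 := bv_spec l b hl hb
  rcases s2 with h|h|h|h|h|h|h|h|h|h|h <;>
    rcases s1 with h'|h'|h'|h'|h'|h'|h'|h'|h'|h'|h' <;> omega


/-- the set `{β_k : k ≥ 3}` is an infinite antichain in the pattern
involvement order: for `k ≠ l`, `β_k` is not involved in `β_l`. -/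
theorem beta_antichain (k l : ℕ) (hk : 3 ≤ k) (hl : 3 ≤ l) (hne : k ≠ l)
    (πk : Equiv.Perm (Fin (2*k+5))) (πl : Equiv.Perm (Fin (2*l+5)))
    (hπk : IsBeta k πk) (hπl : IsBeta l πl) :
    ¬ Involves πk πl := by
  rintro ⟨f, hf, hrel⟩
  rcases Nat.lt_or_ge l k with hkl | hkl
  · have hcard := Fintype.card_le_of_injective f hf.injective
    simp only [Fintype.card_fin] at hcard
    omega
  · obtain ⟨s, hs1, rfl⟩ : ∃ s, 1 ≤ s ∧ l = k + s := ⟨l - k, by omega, by omega⟩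
    clear hkl hne hl
    obtain ⟨g, hg1, hg2, hg3⟩ :
        ∃ g : ℕ → ℕ, (∀ a b, a < b → b < 2*k+5 → g a < g b) ∧
          (∀ j, j < 2*k+5 → g j < 2*(k+s)+5) ∧
          (∀ a b, a < 2*k+5 → b < 2*k+5 →
            (betaVal k a < betaVal k b ↔ betaVal (k+s) (g a) < betaVal (k+s) (g b))) := by
      refine ⟨fun j => if h : j < 2*k+5 then (f ⟨j, h⟩ : Fin (2*(k+s)+5)).val else 0,
        ?_, ?_, ?_⟩
      · intro a b hab hb
        have ha : a < 2*k+5 := hab.trans hb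
        simp only [dif_pos ha, dif_pos hb]
        exact hf (show (⟨a, ha⟩ : Fin (2*k+5)) < ⟨b, hb⟩ from hab)
      · intro j hj
        simp only [dif_pos hj]
        exact (f ⟨j, hj⟩).isLt
      · intro a b ha hb
        simp only [dif_pos ha, dif_pos hb]
        have h5 := hrel ⟨a, ha⟩ ⟨b, hb⟩
        rw [Fin.lt_def, Fin.lt_def] at h5
        rw [hπk ⟨a, ha⟩, hπk ⟨b, hb⟩, hπl (f ⟨a, ha⟩), hπl (f ⟨b, hb⟩)] at h5
        exact h5
    have bkT := bv_tail k hk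
    have blT := bv_tail (k+s) (by omega)
    -- Step 1: the unique 321 pattern pins the images of the last three positions.
    have htail : g (2*k+2) = 2*(k+s)+2 ∧ g (2*k+3) = 2*(k+s)+3 ∧ g (2*k+4) = 2*(k+s)+4 := by
      have o1 : g (2*k+2) < g (2*k+3) := hg1 _ _ (by omega) (by omega)
      have o2 : g (2*k+3) < g (2*k+4) := hg1 _ _ (by omega) (by omega)
      have b2 : g (2*k+3) < 2*(k+s)+5 := hg2 _ (by omega)
      have b3 : g (2*k+4) < 2*(k+s)+5 := hg2 _ (by omega)
      have hv1 : betaVal (k+s) (g (2*k+3)) < betaVal (k+s) (g (2*k+2)) :=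
        (hg3 (2*k+3) (2*k+2) (by omega) (by omega)).mp (by rw [bkT.2.1, bkT.1]; omega)
      have hv2 : betaVal (k+s) (g (2*k+4)) < betaVal (k+s) (g (2*k+3)) :=
        (hg3 (2*k+4) (2*k+3) (by omega) (by omega)).mp (by rw [bkT.2.2, bkT.2.1]; omega)
      have hi1 := bv_inv (k+s) (g (2*k+2)) (g (2*k+3)) (by omega) o1 b2 hv1
      have hi2 := bv_inv (k+s) (g (2*k+3)) (g (2*k+4)) (by omega) o2 b3 hv2
      refine ⟨by omega, by omega, by omega⟩
    -- Step 2: backward induction pins the whole zigzag.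
    have key : ∀ m j, 2 ≤ j → j ≤ k → k - j = m →
        g (2*j) = 2*s+2*j ∧ g (2*j+1) = 2*s+2*j+1 := by
      intro m
      induction m with
      | zero =>
        intro j h2 hjk hm
        have hj : j = k := by omega
        subst hj
        have o1 : g (2*j) < g (2*j+1) := hg1 _ _ (by omega) (by omega)
        have o2 : g (2*j+1) < g (2*j+2) := hg1 _ _ (by omega) (by omega)
        have hx5 : g (2*j) < 2*(j+s)+5 := hg2 _ (by omega)
        have bkm := bv_mid j j hk h2 le_rfl
        have hvup : betaVal (j+s) (g (2*j)) < betaVal (j+s) (g (2*j+2)) :=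
          (hg3 (2*j) (2*j+2) (by omega) (by omega)).mp (by rw [bkm.1, bkT.1]; omega)
        have hvdn : betaVal (j+s) (g (2*j+4)) < betaVal (j+s) (g (2*j)) :=
          (hg3 (2*j+4) (2*j) (by omega) (by omega)).mp (by rw [bkm.1, bkT.2.2]; omega)
        rw [htail.1, blT.1] at hvup
        rw [htail.2.2, blT.2.2] at hvdn
        have hxlt : g (2*j) < 2*(j+s)+2 := by omega
        have hcase : betaVal (j+s) (g (2*j)) = 2*(j+s)+2 ∨
            betaVal (j+s) (g (2*j)) = 2*(j+s)+3 := by omega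
        have hx : g (2*j) = 2*(j+s) := by
          rcases hcase with h | h
          · exact bv_inj (j+s) (g (2*j)) (2*(j+s)) (by omega) hx5 (by omega)
              (by rw [h]; exact ((bv_mid (j+s) (j+s) (by omega) (by omega) le_rfl).1).symm)
          · exfalso
            have := bv_inj (j+s) (g (2*j)) (2*(j+s)+3) (by omega) hx5 (by omega)
              (by rw [h]; exact blT.2.1.symm)
            omega
        have hy : g (2*j+1) = 2*(j+s)+1 := by omega
        exact ⟨by omega, by omega⟩
      | succ n ih =>
        intro j h2 hjk hm
        obtain ⟨ih1, ih2⟩ := ih (j+1) (by omega) (by omega) (by omega)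
        have ih1' : g (2*j+2) = 2*s+2*j+2 := by
          rw [show 2*j+2 = 2*(j+1) by ring]; omega
        have ih2' : g (2*j+3) = 2*s+2*j+3 := by
          rw [show 2*j+3 = 2*(j+1)+1 by ring]; omega
        have o1 : g (2*j) < g (2*j+1) := hg1 _ _ (by omega) (by omega)
        have o2 : g (2*j+1) < g (2*j+2) := hg1 _ _ (by omega) (by omega)
        have hx5 : g (2*j) < 2*(k+s)+5 := hg2 _ (by omega)
        have bkj := bv_mid k j hk h2 (by omega)
        have v1 : betaVal k (2*j+2) = 2*j+4 := by
          have h' := (bv_mid k (j+1) hk (by omega) (by omega)).1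
          rw [show 2*(j+1) = 2*j+2 by ring] at h'
          omega
        have v2 : betaVal k (2*j+3) = 2*j+1 := by
          have h' := (bv_mid k (j+1) hk (by omega) (by omega)).2
          rw [show 2*(j+1)+1 = 2*j+3 by ring] at h'
          omega
        have w1 : betaVal (k+s) (2*s+2*j+2) = 2*s+2*j+4 := by
          have h' := (bv_mid (k+s) (s+j+1) (by omega) (by omega) (by omega)).1
          rw [show 2*(s+j+1) = 2*s+2*j+2 by ring] at h'
          omega
        have w2 : betaVal (k+s) (2*s+2*j+3) = 2*s+2*j+1 := by
          have h' := (bv_mid (k+s) (s+j+1) (by omega) (by omega) (by omega)).2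
          rw [show 2*(s+j+1)+1 = 2*s+2*j+3 by ring] at h'
          omega
        have hvup : betaVal (k+s) (g (2*j)) < betaVal (k+s) (g (2*j+2)) :=
          (hg3 (2*j) (2*j+2) (by omega) (by omega)).mp (by rw [bkj.1, v1]; omega)
        have hvdn : betaVal (k+s) (g (2*j+3)) < betaVal (k+s) (g (2*j)) :=
          (hg3 (2*j+3) (2*j) (by omega) (by omega)).mp (by rw [bkj.1, v2]; omega)
        rw [ih1', w1] at hvup
        rw [ih2', w2] at hvdn
        have hxlt : g (2*j) < 2*s+2*j+2 := by omega
        have hcase : betaVal (k+s) (g (2*j)) = 2*s+2*j+2 ∨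
            betaVal (k+s) (g (2*j)) = 2*s+2*j+3 := by omega
        have hx : g (2*j) = 2*s+2*j := by
          rcases hcase with h | h
          · have w3 : betaVal (k+s) (2*s+2*j) = 2*s+2*j+2 := by
              have h' := (bv_mid (k+s) (s+j) (by omega) (by omega) (by omega)).1
              rw [show 2*(s+j) = 2*s+2*j by ring] at h'
              omega
            exact bv_inj (k+s) (g (2*j)) (2*s+2*j) (by omega) hx5 (by omega)
              (by rw [h, w3])
          · exfalso
            rcases Nat.lt_or_ge (j+1) k with hc | hc
            · have w4 : betaVal (k+s) (2*s+2*j+5) = 2*s+2*j+3 := by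
                have h' := (bv_mid (k+s) (s+j+2) (by omega) (by omega) (by omega)).2
                rw [show 2*(s+j+2)+1 = 2*s+2*j+5 by ring] at h'
                omega
              have := bv_inj (k+s) (g (2*j)) (2*s+2*j+5) (by omega) hx5 (by omega)
                (by rw [h, w4])
              omega
            · have hj : j + 1 = k := by omega
              have := bv_inj (k+s) (g (2*j)) (2*(k+s)+4) (by omega) hx5 (by omega)
                (by rw [h, blT.2.2]; omega)
              omega
        have hy : g (2*j+1) = 2*s+2*j+1 := by omega
        exact ⟨hx, hy⟩
    -- Final contradiction at position 1.
    obtain ⟨c4, c5⟩ := key (k-2) 2 le_rfl (by omega) (by omega)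
    have c4' : g 4 = 2*s+4 := by rw [show (4:ℕ) = 2*2 by norm_num]; omega
    have c5' : g 5 = 2*s+5 := by rw [show (5:ℕ) = 2*2+1 by norm_num]; omega
    have hb1 : betaVal k 1 = 4 := rfl
    have hb4 : betaVal k 4 = 6 := rfl
    have hb5 : betaVal k 5 = 3 := rfl
    have w5 : betaVal (k+s) (2*s+4) = 2*s+6 := by
      have h' := (bv_mid (k+s) (s+2) (by omega) (by omega) (by omega)).1
      rw [show 2*(s+2) = 2*s+4 by ring] at h'
      omega
    have w6 : betaVal (k+s) (2*s+5) = 2*s+3 := by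
      have h' := (bv_mid (k+s) (s+2) (by omega) (by omega) (by omega)).2
      rw [show 2*(s+2)+1 = 2*s+5 by ring] at h'
      omega
    have hvup : betaVal (k+s) (g 1) < betaVal (k+s) (g 4) :=
      (hg3 1 4 (by omega) (by omega)).mp (by rw [hb1, hb4]; omega)
    have hvdn : betaVal (k+s) (g 5) < betaVal (k+s) (g 1) :=
      (hg3 5 1 (by omega) (by omega)).mp (by rw [hb5, hb1]; omega)
    rw [c4', w5] at hvup
    rw [c5', w6] at hvdn
    have o1 : g 1 < g 2 := hg1 _ _ (by omega) (by omega)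
    have o2 : g 2 < g 3 := hg1 _ _ (by omega) (by omega)
    have o3 : g 3 < g 4 := hg1 _ _ (by omega) (by omega)
    have hx5 : g 1 < 2*(k+s)+5 := hg2 _ (by omega)
    have hcase : betaVal (k+s) (g 1) = 2*s+4 ∨ betaVal (k+s) (g 1) = 2*s+5 := by omega
    rcases hcase with h | h
    · have w7 : betaVal (k+s) (2*s+2) = 2*s+4 := by
        have h' := (bv_mid (k+s) (s+1) (by omega) (by omega) (by omega)).1
        rw [show 2*(s+1) = 2*s+2 by ring] at h'
        omega
      have := bv_inj (k+s) (g 1) (2*s+2) (by omega) hx5 (by omega) (by rw [h, w7])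
      omega
    · have w8 : betaVal (k+s) (2*s+7) = 2*s+5 := by
        have h' := (bv_mid (k+s) (s+3) (by omega) (by omega) (by omega)).2
        rw [show 2*(s+3)+1 = 2*s+7 by ring] at h'
        omega
      have := bv_inj (k+s) (g 1) (2*s+7) (by omega) hx5 (by omega) (by rw [h, w8])
      omega
end

section
/- Each permutation β_k (k ≥ 3) defined by β_k = 2,5,1,3,7,4, 9,6,11,8,...,2k+3,2k, 2k+5,2k+4,2k+2 is neither sum decomposable nor skew decomposable. -/
/-! A sum (skew) decomposition of a permutation of `Fin n` is a cut `0 < m < n` such that every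
pair of positions straddling the cut is a non-inversion (an inversion). In `β_k` (positions and
values counted from `0`) every cut is straddled by an inversion, namely `(0, 2)`, `(1, 5)`, one of
the descents `(2i, 2i + 3)` or `(2k, 2k + 4)`, and by a non-inversion, namely `(0, 4)` or the
minimum at position `2` together with the last position. -/

theorem Finset.exists_eq_Iio_of_forall_lt {α : Type*} [LinearOrder α] [Fintype α]
    [LocallyFiniteOrderBot α] {s : Finset α} (hs : s ≠ univ)
    (h : ∀ x ∈ s, ∀ y ∉ s, x < y) : ∃ m, s = Iio m := by
  have hcompl : sᶜ.Nonempty := (compl_ne_univ_iff_nonempty sᶜ).1 (by rwa [compl_compl])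
  obtain ⟨m, hm, hmin⟩ := sᶜ.exists_min_image id hcompl
  refine ⟨m, ext fun x => ⟨fun hx => mem_Iio.2 (h x hx m (mem_compl.1 hm)), fun hx => ?_⟩⟩
  by_contra hxs
  exact (mem_Iio.1 hx).not_ge (hmin x (mem_compl.2 hxs))

section Decomposable

variable {n : ℕ}

theorem Fin.exists_cut_of_initial_block {R : Fin n → Fin n → Prop} {s : Finset (Fin n)}
    (hne : s.Nonempty) (hs : s ≠ Finset.univ) (h : ∀ x ∈ s, ∀ y ∉ s, x < y ∧ R x y) :
    ∃ m : Fin n, 0 < (m : ℕ) ∧ ∀ i j, i < m → m ≤ j → R i j := by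
  obtain ⟨m, rfl⟩ := Finset.exists_eq_Iio_of_forall_lt hs fun x hx y hy => (h x hx y hy).1
  obtain ⟨x, hx⟩ := hne
  refine ⟨m, Nat.zero_lt_of_lt (Fin.lt_def.1 (Finset.mem_Iio.1 hx)), fun i j hi hj => ?_⟩
  exact (h i (Finset.mem_Iio.2 hi) j (by simpa using hj)).2

variable {π : Equiv.Perm (Fin n)}

theorem SumDecomposable.exists_cut (h : SumDecomposable π) :
    ∃ m : Fin n, 0 < (m : ℕ) ∧ ∀ i j, i < m → m ≤ j → π i < π j :=
  let ⟨_, hne, hs, hlt⟩ := h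
  Fin.exists_cut_of_initial_block (R := fun i j => π i < π j) hne hs hlt

theorem SkewDecomposable.exists_cut (h : SkewDecomposable π) :
    ∃ m : Fin n, 0 < (m : ℕ) ∧ ∀ i j, i < m → m ≤ j → π j < π i :=
  let ⟨_, hne, hs, hlt⟩ := h
  Fin.exists_cut_of_initial_block (R := fun i j => π j < π i) hne hs hlt

end Decomposable

section Beta

variable {k : ℕ}

theorem betaVal_of_even {j : ℕ} (h4 : 4 ≤ j) (hj : j ≤ 2 * k + 2) (heven : j % 2 = 0) :
    betaVal k j = j + 2 := by
  unfold betaVal; split_ifs <;> omega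

theorem betaVal_of_odd {j : ℕ} (h5 : 5 ≤ j) (hj : j ≤ 2 * k + 1) (hodd : j % 2 = 1) :
    betaVal k j = j - 2 := by
  unfold betaVal; split_ifs <;> omega

theorem betaVal_last {j : ℕ} (hk : 1 ≤ k) (hj : j = 2 * k + 4) : betaVal k j = 2 * k + 1 := by
  unfold betaVal; split_ifs <;> omega

theorem exists_betaVal_inversion_across (hk : 2 ≤ k) {m : ℕ} (hm0 : 0 < m)
    (hm : m < 2 * k + 5) :
    ∃ a b, a < m ∧ m ≤ b ∧ b < 2 * k + 5 ∧ betaVal k b < betaVal k a := by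
  by_cases h2 : m ≤ 2
  · exact ⟨0, 2, by omega, h2, by omega, by simp [betaVal]⟩
  by_cases h5 : m ≤ 5
  · exact ⟨1, 5, by omega, h5, by omega, by simp [betaVal]⟩
  by_cases h2k : m ≤ 2 * k
  · obtain ⟨a, ha⟩ : ∃ a, a = 2 * ((m - 1) / 2) := ⟨_, rfl⟩
    refine ⟨a, a + 3, by omega, by omega, by omega, ?_⟩
    rw [betaVal_of_even (j := a) (by omega) (by omega) (by omega),
      betaVal_of_odd (j := a + 3) (by omega) (by omega) (by omega)]
    omega
  · refine ⟨2 * k, 2 * k + 4, by omega, by omega, by omega, ?_⟩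
    rw [betaVal_of_even (j := 2 * k) (by omega) (by omega) (by omega), betaVal_last (by omega) rfl]
    omega

theorem exists_betaVal_noninversion_across (hk : 1 ≤ k) {m : ℕ} (hm0 : 0 < m)
    (hm : m < 2 * k + 5) :
    ∃ a b, a < m ∧ m ≤ b ∧ b < 2 * k + 5 ∧ betaVal k a < betaVal k b := by
  by_cases h2 : m ≤ 2
  · exact ⟨0, 4, by omega, by omega, by omega, by simp [betaVal]⟩
  · refine ⟨2, 2 * k + 4, by omega, by omega, by omega, ?_⟩
    rw [betaVal_last hk rfl]
    simp [betaVal]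

theorem IsBeta.apply_lt_apply_iff {π : Equiv.Perm (Fin (2 * k + 5))} (hπ : IsBeta k π)
    (i j : Fin (2 * k + 5)) : π i < π j ↔ betaVal k i < betaVal k j := by
  rw [Fin.lt_def, hπ, hπ]

end Beta

/-- each `β_k` (`k ≥ 3`) is neither sum decomposable nor skew
decomposable. -/
theorem beta_indecomposable (k : ℕ) (hk : 3 ≤ k) (π : Equiv.Perm (Fin (2*k+5)))
    (hπ : IsBeta k π) :
    ¬ SumDecomposable π ∧ ¬ SkewDecomposable π := by
  constructor
  · intro hsum
    obtain ⟨m, hm0, hcut⟩ := hsum.exists_cut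
    obtain ⟨a, b, ham, hmb, hb, hba⟩ := exists_betaVal_inversion_across (by omega) hm0 m.isLt
    exact hba.not_gt ((hπ.apply_lt_apply_iff _ _).1 (hcut ⟨a, by omega⟩ ⟨b, hb⟩ ham hmb))
  · intro hskew
    obtain ⟨m, hm0, hcut⟩ := hskew.exists_cut
    obtain ⟨a, b, ham, hmb, hb, hab⟩ := exists_betaVal_noninversion_across (by omega) hm0 m.isLt
    exact hab.not_gt ((hπ.apply_lt_apply_iff _ _).1 (hcut ⟨a, by omega⟩ ⟨b, hb⟩ ham hmb))
end
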